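/- arXiv:1407.4145 — 2 statements merged into one kernel-verified Lean document; each statement's English description precedes it below -/
import Mathlib

section
/- For any real α, positive integers m and k, the following identity holds for all real x: x·L_{k-2}^{α+2}(x)·L_m^{-α-1}(-x) + (m+1)·L_{k-1}^{α+1}(x)·L_{m+1}^{-α-2}(-x) = (k+α)·L_{k-2}^{α+1}(x)·L_m^{-α-1}(-x) + (m+1)·L_{k-1}^{α+1}(x)·L_{m+1}^{-α-1}(-x) - (m+k)·L_{k-1}^{α+1}(x)·L_m^{-α-1}(-x). -/
open Finset

/-- Generalized Laguerre polynomial `L_n^α(x) = ∑_{k=0}^n (-1)^k binom(n+α, n-k) x^k / k!`. -/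
noncomputable def lag (α : ℝ) (n : ℕ) (x : ℝ) : ℝ :=
  ∑ k ∈ Finset.range (n + 1),
    (-1 : ℝ) ^ k * (∏ j ∈ Finset.range (n - k), (α + (k : ℝ) + 1 + (j : ℝ))) /
      ((Nat.factorial (n - k) : ℝ) * (Nat.factorial k : ℝ)) * x ^ k

/-- Generalized Laguerre polynomial with integer index, with the convention
`L_n^α := 0` for `n < 0`. -/
noncomputable def lagZ (α : ℝ) (n : ℤ) (x : ℝ) : ℝ :=
  if 0 ≤ n then lag α n.toNat x else 0

/-! The identity is a linear combination of two classical contiguous relations,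
`x L_n^{β+1} = (n+1+β) L_n^β - (n+1) L_{n+1}^β` (applied with `β = α + 1`) and
`L_{m+1}^β = L_{m+1}^{β+1} - L_m^{β+1}` (applied with `β = -α - 2` at `-x`). Both are checked
coefficientwise on the explicit expansion of `L_n^β`. -/

theorem prod_range_succ_add_natCast {R : Type*} [CommSemiring R] (c : R) (d : ℕ) :
    ∏ i ∈ range (d + 1), (c + (i : R)) = c * ∏ i ∈ range d, (c + 1 + (i : R)) := by
  rw [prod_range_succ', mul_comm, Nat.cast_zero, add_zero]
  exact congrArg (c * ·) (prod_congr rfl fun i _ => by push_cast; ring)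

/-- Only meaningful for `j ≤ n`: beyond the degree, truncated subtraction makes it nonzero. -/
noncomputable def lagCoeff (α : ℝ) (n j : ℕ) : ℝ :=
  (-1 : ℝ) ^ j * (∏ i ∈ range (n - j), (α + (j : ℝ) + 1 + (i : ℝ))) /
    ((Nat.factorial (n - j) : ℝ) * (Nat.factorial j : ℝ))

theorem lag_eq_sum_lagCoeff (α : ℝ) (n : ℕ) (x : ℝ) :
    lag α n x = ∑ j ∈ range (n + 1), lagCoeff α n j * x ^ j := rfl

theorem lagCoeff_self (α : ℝ) (n : ℕ) :
    lagCoeff α n n = (-1 : ℝ) ^ n / (Nat.factorial n : ℝ) := by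
  simp [lagCoeff]

theorem lagCoeff_succ_of_le (β : ℝ) {n j : ℕ} (hj : j ≤ n) :
    lagCoeff β (n + 1) j = lagCoeff (β + 1) (n + 1) j - lagCoeff (β + 1) n j := by
  obtain ⟨d, rfl⟩ := Nat.exists_eq_add_of_le hj
  have hd₁ : j + d + 1 - j = d + 1 := by omega
  have hd : j + d - j = d := by omega
  unfold lagCoeff
  rw [hd₁, hd, prod_range_succ_add_natCast, prod_range_succ, add_right_comm β 1,
    Nat.factorial_succ]
  have := Nat.factorial_ne_zero d
  have := Nat.factorial_ne_zero j
  push_cast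
  field_simp
  ring

theorem lagCoeff_add_one_of_lt (β : ℝ) {n j : ℕ} (hj : j < n) :
    lagCoeff (β + 1) n j
      = ((n : ℝ) + 1 + β) * lagCoeff β n (j + 1) - ((n : ℝ) + 1) * lagCoeff β (n + 1) (j + 1) := by
  obtain ⟨d, rfl⟩ := Nat.exists_eq_add_of_lt hj
  have hd₁ : j + d + 1 - j = d + 1 := by omega
  have hd : j + d + 1 - (j + 1) = d := by omega
  have hd₂ : j + d + 1 + 1 - (j + 1) = d + 1 := by omega
  unfold lagCoeff
  rw [hd₁, hd, hd₂, prod_range_succ, prod_range_succ, add_right_comm β 1, Nat.factorial_succ d,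
    Nat.factorial_succ j]
  have := Nat.factorial_ne_zero d
  have := Nat.factorial_ne_zero j
  push_cast
  simp only [← add_assoc]
  field_simp
  ring

theorem lagCoeff_zero_succ (β : ℝ) (n : ℕ) :
    ((n : ℝ) + 1) * lagCoeff β (n + 1) 0 = ((n : ℝ) + 1 + β) * lagCoeff β n 0 := by
  unfold lagCoeff
  rw [Nat.sub_zero, Nat.sub_zero, prod_range_succ, Nat.factorial_succ]
  have := Nat.factorial_ne_zero n
  push_cast
  field_simp
  ring

theorem lagCoeff_add_one_self (β : ℝ) (n : ℕ) :
    lagCoeff (β + 1) n n = -(((n : ℝ) + 1) * lagCoeff β (n + 1) (n + 1)) := by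
  rw [lagCoeff_self, lagCoeff_self, Nat.factorial_succ]
  have := Nat.factorial_ne_zero n
  push_cast
  field_simp
  ring

theorem lag_succ_eq_lag_add_one_sub (β : ℝ) (n : ℕ) (x : ℝ) :
    lag β (n + 1) x = lag (β + 1) (n + 1) x - lag (β + 1) n x := by
  simp only [lag_eq_sum_lagCoeff]
  rw [sum_range_succ, sum_range_succ _ (n + 1), lagCoeff_self, lagCoeff_self, add_sub_right_comm,
    ← sum_sub_distrib]
  congr 1
  refine sum_congr rfl fun j hj => ?_
  rw [lagCoeff_succ_of_le β (Nat.lt_succ_iff.mp (mem_range.mp hj)), sub_mul]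

theorem mul_lag_add_one (β : ℝ) (n : ℕ) (x : ℝ) :
    x * lag (β + 1) n x = ((n : ℝ) + 1 + β) * lag β n x - ((n : ℝ) + 1) * lag β (n + 1) x := by
  have interior : ∑ j ∈ range n, x * (lagCoeff (β + 1) n j * x ^ j)
      = ((n : ℝ) + 1 + β) * ∑ j ∈ range n, lagCoeff β n (j + 1) * x ^ (j + 1)
        - ((n : ℝ) + 1) * ∑ j ∈ range n, lagCoeff β (n + 1) (j + 1) * x ^ (j + 1) := by
    rw [mul_sum, mul_sum, ← sum_sub_distrib]
    refine sum_congr rfl fun j hj => ?_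
    rw [lagCoeff_add_one_of_lt β (mem_range.mp hj)]
    ring
  simp only [lag_eq_sum_lagCoeff]
  rw [mul_sum, sum_range_succ, sum_range_succ', sum_range_succ' _ (n + 1), sum_range_succ _ n,
    lagCoeff_add_one_self]
  linear_combination interior + lagCoeff_zero_succ β n

theorem lagZ_natCast (α : ℝ) (n : ℕ) (x : ℝ) : lagZ α (n : ℤ) x = lag α n x := by
  simp [lagZ]

theorem mul_lagZ_add_one (β : ℝ) (n : ℕ) (x : ℝ) :
    x * lagZ (β + 1) ((n : ℤ) - 1) x
      = ((n : ℝ) + β) * lagZ β ((n : ℤ) - 1) x - (n : ℝ) * lag β n x := by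
  cases n with
  | zero => simp [lagZ]
  | succ n =>
    rw [Nat.cast_succ, add_sub_cancel_right, lagZ_natCast, lagZ_natCast, mul_lag_add_one]
    push_cast
    ring

theorem typeIII_alt_rep_general (α : ℝ) (m k : ℕ) (hk : 0 < k) (x : ℝ) :
    x * lagZ (α + 2) ((k : ℤ) - 2) x * lag (-α - 1) m (-x)
      + ((m : ℝ) + 1) * lag (α + 1) (k - 1) x * lag (-α - 2) (m + 1) (-x)
    = ((k : ℝ) + α) * lagZ (α + 1) ((k : ℤ) - 2) x * lag (-α - 1) m (-x)
      + ((m : ℝ) + 1) * lag (α + 1) (k - 1) x * lag (-α - 1) (m + 1) (-x)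
      - ((m : ℝ) + (k : ℝ)) * lag (α + 1) (k - 1) x * lag (-α - 1) m (-x) := by
  obtain ⟨n, rfl⟩ : ∃ n, k = n + 1 := ⟨k - 1, by omega⟩
  have hA := mul_lagZ_add_one (α + 1) n x
  have hB := lag_succ_eq_lag_add_one_sub (-α - 2) m (-x)
  rw [show α + 1 + 1 = α + 2 by ring] at hA
  rw [show -α - 2 + 1 = -α - 1 by ring] at hB
  rw [show ((n + 1 : ℕ) : ℤ) - 2 = (n : ℤ) - 1 by push_cast; ring, Nat.add_sub_cancel]
  push_cast
  linear_combination lag (-α - 1) m (-x) * hA + ((m : ℝ) + 1) * lag (α + 1) n x * hB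

/-- alternative representation of the Type III exceptional
`X_m`-Laguerre polynomial. -/
theorem typeIII_alt_rep (α : ℝ) (m k : ℕ) (hm : 0 < m) (hk : 0 < k) (x : ℝ) :
    x * lagZ (α + 2) ((k : ℤ) - 2) x * lag (-α - 1) m (-x)
      + ((m : ℝ) + 1) * lag (α + 1) (k - 1) x * lag (-α - 2) (m + 1) (-x)
    = ((k : ℝ) + α) * lagZ (α + 1) ((k : ℤ) - 2) x * lag (-α - 1) m (-x)
      + ((m : ℝ) + 1) * lag (α + 1) (k - 1) x * lag (-α - 1) (m + 1) (-x)
      - ((m : ℝ) + (k : ℝ)) * lag (α + 1) (k - 1) x * lag (-α - 1) m (-x) :=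
  typeIII_alt_rep_general α m k hk x
end

section
/- For -1 < α < 0 and integers n ≥ m+1 ≥ 2, the squared L²-norm of the Type III exceptional X_m-Laguerre polynomial with respect to the weight W_m^{III,α}(x) = x^α e^{-x}/(L_m^{-α-1}(-x))^2 on (0,∞) is ∫_0^∞ (L_{m,n}^{III,α}(x))^2 · W_m^{III,α}(x) dx = n·Γ(n - m + α + 1)/(n - m - 1)!. -/
open Finset

/-- The Type III exceptional `X_m`-Laguerre polynomial of degree `m + k` (for `k ≥ 1`):
`L_{m,m+k}^{III,α}(x) = x L_{k-2}^{α+2}(x) L_m^{-α-1}(-x) + (m+1) L_{k-1}^{α+1}(x) L_{m+1}^{-α-2}(-x)`. -/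
noncomputable def LIII (α : ℝ) (m k : ℕ) (x : ℝ) : ℝ :=
  x * lagZ (α + 2) ((k : ℤ) - 2) x * lag (-α - 1) m (-x)
    + ((m : ℝ) + 1) * lag (α + 1) (k - 1) x * lag (-α - 2) (m + 1) (-x)

open MeasureTheory

/-!
Write `η(x) = L_m^{-α-1}(-x)`, `f = L_{n-m-1}^{α+1}` and `L = L_{m,n}^{III,α}`. The three-term
recurrence and the Laguerre equation give `L' = n η f` and
`L = (x η' - (α + 1 - x) η) f - x η f'`, and these two identities make
`F = f L x^{α+1} e^{-x} / η` an antiderivative of `n f² x^{α+1} e^{-x} - L² W`. Since `η ≥ η(0) > 0`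
on `[0, ∞)`, `F` vanishes at `0` and at `∞`, so the norm of `L` is `n` times the classical norm
`Γ(n - m + α + 1)/(n - m - 1)!` of `f`. The classical norm follows from the same identity with
`η = 1` and `L = -(j + 1) L_{j+1}^β`, which gives `(j + 1) ‖L_{j+1}^β‖² = ‖L_j^{β+1}‖²`.
-/

open Polynomial Filter Topology
open Set (Ioi Ici)

noncomputable def lagPoly (β : ℝ) (n : ℕ) : ℝ[X] :=
  ∑ k ∈ range (n + 1),
    C ((-1 : ℝ) ^ k * (∏ j ∈ range (n - k), (β + (k : ℝ) + 1 + (j : ℝ))) /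
      ((Nat.factorial (n - k) : ℝ) * (Nat.factorial k : ℝ))) * X ^ k

@[simp]
lemma eval_lagPoly (β : ℝ) (n : ℕ) (x : ℝ) : (lagPoly β n).eval x = lag β n x := by
  simp [lagPoly, lag, eval_finsetSum]

@[simp]
lemma lagPoly_zero (β : ℝ) : lagPoly β 0 = 1 := by
  simp [lagPoly]

lemma lagPoly_one (β : ℝ) : lagPoly β 1 = C (β + 1) - X := by
  simp [lagPoly, sum_range_succ, sub_eq_add_neg]

lemma lag_apply_zero (β : ℝ) (n : ℕ) :
    lag β n 0 = (∏ r ∈ range n, (β + 1 + r)) / n.factorial := by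
  rw [lag, sum_eq_single 0 (fun k _ hk => by simp [zero_pow hk]) (by simp)]
  simp

lemma derivative_lagPoly_succ (β : ℝ) (n : ℕ) :
    derivative (lagPoly β (n + 1)) = -lagPoly (β + 1) n := by
  rw [lagPoly, derivative_sum, sum_range_succ', lagPoly, ← sum_neg_distrib]
  simp only [derivative_C_mul_X_pow, Nat.cast_zero, mul_zero, C_0, zero_mul, add_zero]
  refine sum_congr rfl fun k _ => ?_
  rw [Nat.add_sub_cancel, ← neg_mul, ← C_neg, Nat.add_sub_add_right, Nat.factorial_succ]
  congr 2
  push_cast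
  rw [show ∏ j ∈ range (n - k), (β + (k + 1) + 1 + j) = ∏ j ∈ range (n - k), (β + 1 + k + 1 + j)
    from prod_congr rfl fun j _ => by ring]
  field_simp
  ring

lemma succ_mul_lagPoly_succ (β : ℝ) (n : ℕ) :
    ((n : ℝ[X]) + 1) * lagPoly β (n + 1) =
      (C (β + 1) - X) * lagPoly (β + 1) n + X * derivative (lagPoly (β + 1) n) := by
  induction n generalizing β with
  | zero => simp [lagPoly_one]
  | succ n ih =>
    set Φ := ((n : ℝ[X]) + 1 + 1) * lagPoly β (n + 2) - (C (β + 1) - X) * lagPoly (β + 1) (n + 1)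
      - X * derivative (lagPoly (β + 1) (n + 1)) with hΦ
    have hΦ' : derivative Φ = 0 := by
      have h := ih (β + 1)
      simp only [map_add, map_one] at h
      simp only [hΦ, derivative_mul, derivative_sub, derivative_C, derivative_X,
        derivative_natCast, derivative_one, derivative_lagPoly_succ, derivative_neg, map_add,
        map_one]
      linear_combination -h
    have hΦ0 : Φ.eval 0 = 0 := by
      simp only [hΦ, eval_sub, eval_add, eval_mul, eval_C, eval_X, eval_natCast, eval_one,
        eval_lagPoly, lag_apply_zero, zero_mul, sub_zero]
      rw [prod_range_succ' (fun r : ℕ => β + 1 + r), Nat.factorial_succ (n + 1)]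
      push_cast
      rw [show ∏ j ∈ range (n + 1), (β + 1 + (j + 1 : ℝ)) = ∏ j ∈ range (n + 1), (β + 1 + 1 + j)
        from prod_congr rfl fun j _ => by ring]
      field_simp
      ring
    have hΦ_eq : Φ = 0 := by
      rw [eq_C_of_derivative_eq_zero hΦ', coeff_zero_eq_eval_zero, hΦ0, C_0]
    push_cast
    linear_combination hΦ_eq

lemma laguerre_ode (β : ℝ) (n : ℕ) :
    X * derivative (derivative (lagPoly β n)) + (C (β + 1) - X) * derivative (lagPoly β n)
      + (n : ℝ[X]) * lagPoly β n = 0 := by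
  cases n with
  | zero => simp
  | succ n =>
    have h := succ_mul_lagPoly_succ β n
    rw [derivative_lagPoly_succ, derivative_neg]
    push_cast
    linear_combination h

lemma lag_apply_zero_pos {β : ℝ} (hβ : -1 < β) (n : ℕ) : 0 < lag β n 0 := by
  rw [lag_apply_zero]
  exact div_pos (prod_pos fun r _ => by linarith [r.cast_nonneg (α := ℝ)]) (by positivity)

lemma lag_apply_zero_le_lag_neg {β : ℝ} (hβ : -1 < β) (n : ℕ) {x : ℝ} (hx : 0 ≤ x) :
    lag β n 0 ≤ lag β n (-x) := by
  have hsign : ∀ (k : ℕ) (a y : ℝ), (-1) ^ k * a * (-y) ^ k = a * y ^ k := fun k a y => by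
    rw [neg_pow y, mul_mul_mul_comm, ← mul_pow]; norm_num
  rw [← neg_zero, lag, lag]
  simp only [mul_div_assoc, hsign]
  gcongr with k hk
  exact div_nonneg
    (prod_nonneg fun j _ => by linarith [k.cast_nonneg (α := ℝ), j.cast_nonneg (α := ℝ)])
    (by positivity)

section GammaWeight

variable {s : ℝ}

lemma integrableOn_rpow_mul_exp_neg (hs : -1 < s) :
    IntegrableOn (fun x : ℝ => x ^ s * Real.exp (-x)) (Ioi 0) := by
  simpa [mul_comm] using Real.GammaIntegral_convergent (s := s + 1) (by linarith)

lemma integral_rpow_mul_exp_neg (hs : -1 < s) :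
    ∫ x in Ioi (0 : ℝ), x ^ s * Real.exp (-x) = Real.Gamma (s + 1) := by
  simp [Real.Gamma_eq_integral (show 0 < s + 1 by linarith), mul_comm]

lemma integrableOn_eval_mul_rpow_mul_exp_neg (P : ℝ[X]) (hs : -1 < s) :
    IntegrableOn (fun x => P.eval x * (x ^ s * Real.exp (-x))) (Ioi 0) := by
  induction P using Polynomial.induction_on' with
  | add p q hp hq =>
    exact (hp.add hq).congr_fun (fun x _ => by simp only [Pi.add_apply, eval_add]; ring)
      measurableSet_Ioi
  | monomial n c =>
    have hns : -1 < (n : ℝ) + s := by linarith [n.cast_nonneg (α := ℝ)]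
    refine IntegrableOn.congr_fun ((integrableOn_rpow_mul_exp_neg hns).const_mul c)
      (fun x hx => ?_) measurableSet_Ioi
    simp only [eval_monomial, Real.rpow_add (show (0 : ℝ) < x from hx), Real.rpow_natCast]
    ring

lemma tendsto_eval_mul_rpow_mul_exp_neg_atTop (P : ℝ[X]) (s : ℝ) :
    Tendsto (fun x => P.eval x * (x ^ s * Real.exp (-x))) atTop (𝓝 0) := by
  induction P using Polynomial.induction_on' with
  | add p q hp hq => simpa [add_mul] using hp.add hq
  | monomial n c =>
    have h := (tendsto_rpow_mul_exp_neg_mul_atTop_nhds_zero (n + s) 1 one_pos).const_mul c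
    rw [mul_zero] at h
    refine h.congr' ?_
    filter_upwards [eventually_gt_atTop 0] with x hx
    simp only [eval_monomial, Real.rpow_add hx, Real.rpow_natCast, neg_one_mul]
    ring

lemma hasDerivAt_rpow_mul_exp_neg {x : ℝ} (hx : 0 < x) :
    HasDerivAt (fun y => y ^ s * Real.exp (-y)) ((s - x) * (x ^ (s - 1) * Real.exp (-x))) x := by
  refine ((Real.hasDerivAt_rpow_const (p := s) (Or.inl hx.ne')).mul
    (hasDerivAt_neg x).exp).congr_deriv ?_
  rw [Real.rpow_sub_one hx.ne']
  field_simp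
  ring

end GammaWeight

section WeightedIdentity

variable {s n : ℝ} {f η L : ℝ[X]}

lemma integrableOn_eval_sq_mul_rpow_mul_exp_neg_div_sq (P : ℝ[X]) (hs : -1 < s)
    (hη0 : 0 < η.eval 0) (hη : ∀ x, 0 ≤ x → η.eval 0 ≤ η.eval x) :
    IntegrableOn (fun x => P.eval x ^ 2 * (x ^ s * Real.exp (-x) / η.eval x ^ 2)) (Ioi 0) := by
  refine Integrable.mono' ((integrableOn_eval_mul_rpow_mul_exp_neg (P ^ 2) hs).const_mul
    (η.eval 0 ^ 2)⁻¹) ?_ ?_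
  · refine ContinuousOn.aestronglyMeasurable (fun x hx => ContinuousAt.continuousWithinAt ?_)
      measurableSet_Ioi
    have hη2 : η.eval x ^ 2 ≠ 0 := pow_ne_zero 2 (hη0.trans_le (hη x (le_of_lt hx))).ne'
    have hxs : x ≠ 0 ∨ 0 ≤ s := Or.inl (ne_of_gt hx)
    fun_prop (disch := assumption)
  · refine (ae_restrict_iff' measurableSet_Ioi).2 (ae_of_all _ fun x (hx : 0 < x) => ?_)
    have hηx := hη x hx.le
    rw [Real.norm_of_nonneg (by positivity), eval_pow, mul_div_assoc', div_eq_inv_mul]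
    gcongr

lemma hasDerivAt_eval_mul_rpow_mul_exp_neg_div (hL' : derivative L = C n * η * f)
    (hL : L = (X * derivative η - (C s - X) * η) * f - X * η * derivative f) {x : ℝ}
    (hx : 0 < x) (hηx : η.eval x ≠ 0) :
    HasDerivAt (fun y => (f * L).eval y * (y ^ s * Real.exp (-y)) / η.eval y)
      (n * f.eval x ^ 2 * (x ^ s * Real.exp (-x))
        - L.eval x ^ 2 * (x ^ (s - 1) * Real.exp (-x) / η.eval x ^ 2)) x := by
  refine ((((f * L).hasDerivAt x).mul (hasDerivAt_rpow_mul_exp_neg hx)).div (η.hasDerivAt x)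
    hηx).congr_deriv ?_
  have hL'x := congrArg (eval x) hL'
  have hLx := congrArg (eval x) hL
  simp only [eval_mul, eval_add, eval_sub, eval_C, eval_X, derivative_mul, Pi.mul_apply]
    at hL'x hLx ⊢
  rw [hL'x, show x ^ s = x * x ^ (s - 1) by rw [Real.rpow_sub_one hx.ne']; field_simp]
  field_simp
  linear_combination L.eval x * hLx

theorem integral_eval_sq_div_sq_eq_mul (hs : 0 < s) (hη0 : 0 < η.eval 0)
    (hη : ∀ x, 0 ≤ x → η.eval 0 ≤ η.eval x) (hL' : derivative L = C n * η * f)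
    (hL : L = (X * derivative η - (C s - X) * η) * f - X * η * derivative f) :
    ∫ x in Ioi (0 : ℝ), L.eval x ^ 2 * (x ^ (s - 1) * Real.exp (-x) / η.eval x ^ 2)
      = n * ∫ x in Ioi (0 : ℝ), f.eval x ^ 2 * (x ^ s * Real.exp (-x)) := by
  set F := fun y => (f * L).eval y * (y ^ s * Real.exp (-y)) / η.eval y
  have hη_ne : ∀ x, 0 ≤ x → η.eval x ≠ 0 := fun x hx => (hη0.trans_le (hη x hx)).ne'
  have hf_int : IntegrableOn (fun x => n * f.eval x ^ 2 * (x ^ s * Real.exp (-x))) (Ioi 0) :=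
    (integrableOn_eval_mul_rpow_mul_exp_neg (C n * f ^ 2) (s := s) (by linarith)).congr_fun
      (fun x _ => by simp) measurableSet_Ioi
  have hL_int := integrableOn_eval_sq_mul_rpow_mul_exp_neg_div_sq L (s := s - 1) (by linarith)
    hη0 hη
  have hF0 : ContinuousWithinAt F (Ici 0) 0 := by
    have h0 : η.eval 0 ≠ 0 := hη0.ne'
    have hs' : (0 : ℝ) ≠ 0 ∨ 0 ≤ s := Or.inr hs.le
    exact ContinuousAt.continuousWithinAt (by fun_prop (disch := assumption))
  have hF_top : Tendsto F atTop (𝓝 0) := by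
    have h := ((tendsto_eval_mul_rpow_mul_exp_neg_atTop (f * L) s).norm.const_mul (η.eval 0)⁻¹)
    rw [norm_zero, mul_zero] at h
    refine squeeze_zero_norm' ?_ h
    filter_upwards [eventually_ge_atTop 0] with x hx
    rw [norm_div, Real.norm_of_nonneg (hη0.le.trans (hη x hx)), div_eq_inv_mul]
    gcongr
    exact hη x hx
  have hFTC := integral_Ioi_of_hasDerivAt_of_tendsto hF0
    (fun x (hx : 0 < x) => hasDerivAt_eval_mul_rpow_mul_exp_neg_div hL' hL hx (hη_ne x hx.le))
    (hf_int.sub hL_int) hF_top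
  rw [integral_sub hf_int hL_int] at hFTC
  simp only [F, Real.zero_rpow hs.ne', zero_mul, mul_zero, zero_div, sub_zero, sub_eq_zero] at hFTC
  rw [← hFTC, ← integral_const_mul]
  simp only [mul_assoc]

end WeightedIdentity

theorem integral_lag_sq {β : ℝ} (hβ : -1 < β) (j : ℕ) :
    ∫ x in Ioi (0 : ℝ), lag β j x ^ 2 * (x ^ β * Real.exp (-x))
      = Real.Gamma (β + j + 1) / j.factorial := by
  induction j generalizing β with
  | zero => simpa [lag] using integral_rpow_mul_exp_neg hβ
  | succ j ih =>
    have h := integral_eval_sq_div_sq_eq_mul (s := β + 1) (n := j + 1) (η := 1)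
      (f := lagPoly (β + 1) j) (L := -((j : ℝ[X]) + 1) * lagPoly β (j + 1)) (by linarith)
      (by simp) (by simp) (by simp [derivative_lagPoly_succ]; ring)
      (by simp only [derivative_one, mul_zero, zero_sub, mul_one]
          linear_combination -succ_mul_lagPoly_succ β j)
    simp only [eval_lagPoly] at h
    rw [ih (by linarith)] at h
    have key : ((j : ℝ) + 1) ^ 2 * ∫ x in Ioi (0 : ℝ), lag β (j + 1) x ^ 2 * (x ^ β * Real.exp (-x))
        = (j + 1) * (Real.Gamma (β + 1 + j + 1) / j.factorial) := by
      rw [← h, ← integral_const_mul]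
      congr 1 with x
      simp only [eval_mul, eval_neg, eval_add, eval_natCast, eval_one, eval_lagPoly,
        add_sub_cancel_right, one_pow, div_one]
      ring
    apply mul_left_cancel₀ (show ((j : ℝ) + 1) ^ 2 ≠ 0 by positivity)
    rw [key, Nat.factorial_succ]
    push_cast
    rw [show β + ((j : ℝ) + 1) + 1 = β + 1 + j + 1 by ring]
    field_simp

lemma lagZ_sub_one (β : ℝ) (k : ℕ) (x : ℝ) :
    lagZ (β + 1) ((k : ℤ) - 1) x = -(derivative (lagPoly β k)).eval x := by
  cases k with
  | zero => simp [lagZ]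
  | succ k => simp [lagZ, derivative_lagPoly_succ]

lemma lagPoly_succ_comp_neg (β : ℝ) (m : ℕ) :
    ((m : ℝ[X]) + 1) * (lagPoly β (m + 1)).comp (-X)
      = X * derivative ((lagPoly (β + 1) m).comp (-X))
        + (C (β + 1) + X) * (lagPoly (β + 1) m).comp (-X) := by
  have h := congrArg (fun p => p.comp (-X)) (succ_mul_lagPoly_succ β m)
  simp only [mul_comp, add_comp, sub_comp, natCast_comp, one_comp, C_comp, X_comp] at h
  rw [derivative_comp, h]
  simp only [map_add, map_one, derivative_neg, derivative_X]
  ring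

noncomputable def LIIIPoly (α : ℝ) (m k : ℕ) : ℝ[X] :=
  ((m : ℝ[X]) + 1) * (lagPoly (-α - 2) (m + 1)).comp (-X) * lagPoly (α + 1) k
    - X * (lagPoly (-α - 1) m).comp (-X) * derivative (lagPoly (α + 1) k)

lemma eval_LIIIPoly (α : ℝ) (m k : ℕ) (x : ℝ) : (LIIIPoly α m k).eval x = LIII α m (k + 1) x := by
  rw [LIII, show ((k + 1 : ℕ) : ℤ) - 2 = (k : ℤ) - 1 by push_cast; ring,
    show α + 2 = α + 1 + 1 by ring, lagZ_sub_one]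
  simp only [LIIIPoly, eval_sub, eval_mul, eval_add, eval_natCast, eval_one, eval_comp, eval_neg,
    eval_X, eval_lagPoly, add_tsub_cancel_right]
  ring

lemma LIIIPoly_eq (α : ℝ) (m k : ℕ) :
    LIIIPoly α m k
      = (X * derivative ((lagPoly (-α - 1) m).comp (-X))
          - (C (α + 1) - X) * (lagPoly (-α - 1) m).comp (-X)) * lagPoly (α + 1) k
        - X * (lagPoly (-α - 1) m).comp (-X) * derivative (lagPoly (α + 1) k) := by
  have h := lagPoly_succ_comp_neg (-α - 2) m
  rw [show -α - 2 + 1 = -α - 1 by ring] at h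
  rw [LIIIPoly, h]
  simp only [map_sub, map_neg, map_add, map_one]
  ring

lemma derivative_LIIIPoly (α : ℝ) (m k : ℕ) :
    derivative (LIIIPoly α m k)
      = C ((m : ℝ) + k + 1) * (lagPoly (-α - 1) m).comp (-X) * lagPoly (α + 1) k := by
  have hb := lagPoly_succ_comp_neg (-α - 2) m
  rw [show -α - 2 + 1 = -α - 1 by ring] at hb
  have hb' : derivative ((lagPoly (-α - 2) (m + 1)).comp (-X))
      = (lagPoly (-α - 1) m).comp (-X) := by
    simp [derivative_comp, derivative_lagPoly_succ, show -α - 2 + 1 = -α - 1 by ring]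
  have hode := laguerre_ode (α + 1) k
  rw [LIIIPoly]
  simp only [derivative_mul, derivative_sub, derivative_add, derivative_X, derivative_natCast,
    derivative_one, hb']
  simp only [map_add, map_sub, map_neg, map_natCast, map_one] at hb hode ⊢
  linear_combination derivative (lagPoly (α + 1) k) * hb - (lagPoly (-α - 1) m).comp (-X) * hode

theorem typeIII_norm_general (α : ℝ) (hα1 : -1 < α) (hα2 : α < 0) (m n : ℕ)
    (hn : m + 1 ≤ n) :
    (∫ x in Set.Ioi (0 : ℝ),
        (LIII α m (n - m) x) ^ 2 * (x ^ α * Real.exp (-x) / (lag (-α - 1) m (-x)) ^ 2))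
      = (n : ℝ) * Real.Gamma ((n : ℝ) - (m : ℝ) + α + 1)
          / (Nat.factorial (n - m - 1) : ℝ) := by
  obtain ⟨k, rfl⟩ : ∃ k, n = m + k + 1 := ⟨n - m - 1, by omega⟩
  have hβ : -1 < -α - 1 := by linarith
  have h := integral_eval_sq_div_sq_eq_mul (s := α + 1) (n := m + k + 1) (by linarith)
    (by simpa using lag_apply_zero_pos hβ m)
    (fun x hx => by simpa using lag_apply_zero_le_lag_neg hβ m hx)
    (derivative_LIIIPoly α m k) (LIIIPoly_eq α m k)
  simp only [eval_LIIIPoly, eval_comp, eval_neg, eval_X, eval_lagPoly, add_sub_cancel_right] at h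
  rw [integral_lag_sq (by linarith)] at h
  rw [show m + k + 1 - m = k + 1 by omega, Nat.add_sub_cancel, h]
  push_cast
  rw [show (m : ℝ) + k + 1 - m + α + 1 = α + 1 + k + 1 by ring, mul_div_assoc]

/-- for `-1 < α < 0` and `n ≥ m+1 ≥ 2`, the squared norm of the Type III
exceptional `X_m`-Laguerre polynomial `L_{m,n}^{III,α}` with respect to the weight
`W_m^{III,α}(x) = x^α e^{-x}/(L_m^{-α-1}(-x))²` on `(0,∞)` is
`n Γ(n-m+α+1)/(n-m-1)!`. (Here `L_{m,n}^{III,α} = LIII α m (n-m)`.) -/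
theorem typeIII_norm (α : ℝ) (hα1 : -1 < α) (hα2 : α < 0) (m n : ℕ)
    (hm : 1 ≤ m) (hn : m + 1 ≤ n) :
    (∫ x in Set.Ioi (0 : ℝ),
        (LIII α m (n - m) x) ^ 2 * (x ^ α * Real.exp (-x) / (lag (-α - 1) m (-x)) ^ 2))
      = (n : ℝ) * Real.Gamma ((n : ℝ) - (m : ℝ) + α + 1)
          / (Nat.factorial (n - m - 1) : ℝ) :=
  typeIII_norm_general α hα1 hα2 m n hn
end
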